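/- arXiv:2103.11856 — 2 statements merged into one kernel-verified Lean document; each statement's English description precedes it below -/
import Mathlib

section
/- For weight 2, the maximum size of a W-light constant weight code satisfies L(W,n,2) = min(⌊(W+1)n/2⌋, C(n,2)). -/
def weight {n : ℕ} (B : Fin n → Bool) : ℕ :=
  (Finset.univ.filter (fun i => B i = true)).card

def hamming {n : ℕ} (B B' : Fin n → Bool) : ℕ :=
  (Finset.univ.filter (fun i => B i ≠ B' i)).card

theorem hamming_comm {n : ℕ} (B B' : Fin n → Bool) : hamming B B' = hamming B' B := by
  unfold hamming; congr 1; ext i; simp [ne_comm]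

def johnson (n w : ℕ) : SimpleGraph {B : Fin n → Bool // weight B = w} where
  Adj B B' := hamming B.1 B'.1 = 2
  symm := ⟨fun B B' h => by show hamming B'.1 B.1 = 2; rw [hamming_comm]; exact h⟩
  loopless := ⟨fun B h => by simp [hamming] at h⟩

structure GraphOrientation {V : Type*} (G : SimpleGraph V) where
  dir : V → V → Prop
  dir_adj : ∀ u v, dir u v → G.Adj u v
  total : ∀ u v, G.Adj u v → dir u v ∨ dir v u
  asymm : ∀ u v, dir u v → ¬ dir v u

noncomputable def outdeg {V : Type*} {G : SimpleGraph V} (Λ : GraphOrientation G) (v : V) : ℕ :=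
  {u | Λ.dir v u}.ncard

noncomputable def Lmax (W n w : ℕ) : ℕ :=
  sSup {k | ∃ Λ : GraphOrientation (johnson n w), k = {B | outdeg Λ B ≤ W}.ncard}

/-!
Upper bound: let `S` be the set of light words (outdegree at most `W`), seen as edges of `Kₙ`,
and `d v` the number of them through the point `v`. Two words of `S` through a common point are
adjacent, so `∑ d v (d v - 1)` is at most the number of ordered adjacent pairs in `S`, hence at
most `2 ∑_{e ∈ S} outdeg e ≤ 2W·#S`. As `∑ d v = 2·#S`, Cauchy–Schwarz gives
`(2·#S)² ≤ n ∑ d v² ≤ n (W + 1)·2·#S`.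

Lower bound: with `K = min (W + 1) (n - 1)`, take the Harary graph on `ℤ/n` (chords of length at
most `K/2`, plus a matching of near-diameters when `K` is odd), which has `⌊Kn/2⌋` edges. Each
point `a` ranks the other points so that along every edge `ab` of that graph the rank of `b` at
`a` and the rank of `a` at `b` add up to `K - 1`. Orienting `{a, b} → {a, c}` when `c` ranks below
`b` at `a`, the word `{a, b}` has outdegree at most the sum of these two ranks, so every edge of
the Harary graph is a light word.
-/
open Finset

lemma Finset.sum_le_mul_card_of_sum_sq_le {ι : Type*} (s : Finset ι) (d : ι → ℕ) (c : ℕ)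
    (h : ∑ i ∈ s, d i ^ 2 ≤ c * ∑ i ∈ s, d i) : ∑ i ∈ s, d i ≤ c * #s := by
  rcases Nat.eq_zero_or_pos (∑ i ∈ s, d i) with h0 | hpos
  · simp [h0]
  refine Nat.le_of_mul_le_mul_left ?_ hpos
  calc (∑ i ∈ s, d i) * ∑ i ∈ s, d i = (∑ i ∈ s, d i) ^ 2 := (sq _).symm
    _ ≤ #s * ∑ i ∈ s, d i ^ 2 := sq_sum_le_card_mul_sum_sq
    _ ≤ #s * (c * ∑ i ∈ s, d i) := Nat.mul_le_mul_left _ h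
    _ = (∑ i ∈ s, d i) * (c * #s) := by ring

lemma GraphOrientation.card_adj_le_two_mul_sum_outdeg {V : Type*} [Fintype V]
    {G : SimpleGraph V} [DecidableRel G.Adj] (Λ : GraphOrientation G) (S : Finset V) :
    #{p ∈ S ×ˢ S | G.Adj p.1 p.2} ≤ 2 * ∑ v ∈ S, outdeg Λ v := by
  classical
  set P := {p ∈ S ×ˢ S | Λ.dir p.1 p.2}
  have hsplit : {p ∈ S ×ˢ S | G.Adj p.1 p.2} ⊆ P ∪ P.image Prod.swap := by
    rintro ⟨u, v⟩ hp
    simp only [mem_filter, mem_product] at hp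
    rcases Λ.total u v hp.2 with h | h
    · exact mem_union_left _ (by simp [P, hp.1, h])
    · exact mem_union_right _ (mem_image.2 ⟨(v, u), by simp [P, hp.1, h], rfl⟩)
  have hP : #P ≤ ∑ v ∈ S, outdeg Λ v := by
    rw [card_filter, sum_product]
    refine sum_le_sum fun v _ => ?_
    rw [← card_filter, outdeg, ← Set.ncard_coe_finset]
    exact Set.ncard_le_ncard (by intro u; simp) (Set.toFinite _)
  calc #{p ∈ S ×ˢ S | G.Adj p.1 p.2} ≤ #P + #(P.image Prod.swap) :=
        (card_le_card hsplit).trans (card_union_le _ _)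
    _ ≤ 2 * ∑ v ∈ S, outdeg Λ v := by have := card_image_le (s := P) (f := Prod.swap); omega

abbrev Doubleton (n : ℕ) := {B : Fin n → Bool // weight B = 2}

namespace Doubleton

variable {n : ℕ}

def supp (e : Doubleton n) : Finset (Fin n) := {i | e.1 i = true}

@[simp] lemma mem_supp {e : Doubleton n} {i : Fin n} : i ∈ e.supp ↔ e.1 i = true := by
  simp [supp]

lemma card_supp (e : Doubleton n) : #e.supp = 2 := e.2

lemma supp_injective : Function.Injective (supp (n := n)) := by
  intro e f h
  ext i
  simpa using congrArg (i ∈ ·) h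

def ofFinset (s : Finset (Fin n)) (hs : #s = 2) : Doubleton n :=
  ⟨fun i => decide (i ∈ s), by simpa [weight] using hs⟩

@[simp] lemma supp_ofFinset (s : Finset (Fin n)) (hs : #s = 2) : (ofFinset s hs).supp = s := by
  ext i
  simp [ofFinset]

def equivFinset : Doubleton n ≃ {s : Finset (Fin n) // #s = 2} where
  toFun e := ⟨e.supp, e.card_supp⟩
  invFun s := ofFinset s.1 s.2
  left_inv _ := supp_injective (supp_ofFinset _ _)
  right_inv _ := Subtype.ext (supp_ofFinset _ _)

lemma card_eq_choose : Nat.card (Doubleton n) = n.choose 2 := by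
  rw [Nat.card_congr equivFinset, Nat.card_eq_fintype_card, Fintype.card_finset_len,
    Fintype.card_fin]

lemma exists_mem_supp_ne (e : Doubleton n) (a : Fin n) : ∃ b ∈ e.supp, b ≠ a :=
  exists_mem_ne (by rw [card_supp]; norm_num) a

lemma supp_eq_pair {e : Doubleton n} {a b : Fin n} (hab : a ≠ b) (ha : a ∈ e.supp)
    (hb : b ∈ e.supp) : e.supp = {a, b} :=
  (eq_of_subset_of_card_le (by simp [insert_subset_iff, ha, hb])
    (by rw [card_supp, card_pair hab])).symm

lemma eq_of_ne_of_mem {e : Doubleton n} {a b c : Fin n} (ha : a ∈ e.supp) (hb : b ∈ e.supp)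
    (hc : c ∈ e.supp) (hba : b ≠ a) (hca : c ≠ a) : b = c := by
  rw [supp_eq_pair hba.symm ha hb] at hc
  simp only [mem_insert, mem_singleton] at hc
  exact (hc.resolve_left hca).symm

lemma eq_of_mem_of_mem {e f : Doubleton n} {a b : Fin n} (hab : a ≠ b) (hae : a ∈ e.supp)
    (hbe : b ∈ e.supp) (haf : a ∈ f.supp) (hbf : b ∈ f.supp) : e = f :=
  supp_injective (by rw [supp_eq_pair hab hae hbe, supp_eq_pair hab haf hbf])

lemma card_inter_supp_eq_two_iff {e f : Doubleton n} : #(e.supp ∩ f.supp) = 2 ↔ e = f := by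
  refine ⟨fun h => supp_injective ?_, fun h => by rw [h, inter_self, card_supp]⟩
  exact (eq_of_subset_of_card_le inter_subset_left (by rw [h, card_supp])).symm.trans
    (eq_of_subset_of_card_le inter_subset_right (by rw [h, card_supp]))

lemma hamming_add_two_mul_card_inter (e f : Doubleton n) :
    hamming e.1 f.1 + 2 * #(e.supp ∩ f.supp) = 4 := by
  have hsymm : ({i | e.1 i ≠ f.1 i} : Finset (Fin n)) =
      (e.supp ∪ f.supp) \ (e.supp ∩ f.supp) := by
    ext i
    cases h : e.1 i <;> cases h' : f.1 i <;> simp [h, h']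
  have := card_union_add_card_inter e.supp f.supp
  rw [hamming, hsymm, card_sdiff_of_subset inter_subset_union, card_supp, card_supp] at *
  have := card_le_card (inter_subset_union (s := e.supp) (t := f.supp))
  omega

lemma johnson_adj_iff {e f : Doubleton n} :
    (johnson n 2).Adj e f ↔ e ≠ f ∧ ∃ a, a ∈ e.supp ∧ a ∈ f.supp := by
  have hham := hamming_add_two_mul_card_inter e f
  have hle : #(e.supp ∩ f.supp) ≤ 2 := (card_le_card inter_subset_left).trans (card_supp e).le
  have hpos : (∃ a, a ∈ e.supp ∧ a ∈ f.supp) ↔ 0 < #(e.supp ∩ f.supp) := by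
    simp [card_pos, Finset.Nonempty]
  change hamming e.1 f.1 = 2 ↔ _
  rw [hpos, Ne, ← card_inter_supp_eq_two_iff]
  omega

instance : DecidableRel (johnson n 2).Adj :=
  fun e f => inferInstanceAs (Decidable (hamming e.1 f.1 = 2))

def degree (S : Finset (Doubleton n)) (v : Fin n) : ℕ := #{e ∈ S | v ∈ e.supp}

lemma sum_degree (S : Finset (Doubleton n)) : ∑ v, degree S v = 2 * #S := by
  have := sum_card_bipartiteAbove_eq_sum_card_bipartiteBelow (s := univ) (t := S)
    (r := fun v (e : Doubleton n) => v ∈ e.supp)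
  simp only [bipartiteAbove, bipartiteBelow, filter_univ_mem, card_supp, sum_const,
    smul_eq_mul] at this
  rwa [mul_comm] at this

lemma sum_degree_mul_pred_le (S : Finset (Doubleton n)) :
    ∑ v, degree S v * (degree S v - 1) ≤ #{p ∈ S ×ˢ S | (johnson n 2).Adj p.1 p.2} := by
  have hdisj : ((univ : Finset (Fin n)) : Set (Fin n)).PairwiseDisjoint
      fun v => ({e ∈ S | v ∈ e.supp} : Finset _).offDiag := by
    intro v _ w _ hvw
    refine disjoint_left.2 fun ⟨e, f⟩ hv hw => ?_
    simp only [mem_offDiag, mem_filter] at hv hw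
    exact hv.2.2 (eq_of_mem_of_mem hvw hv.1.2 hw.1.2 hv.2.1.2 hw.2.1.2)
  calc ∑ v, degree S v * (degree S v - 1)
      = ∑ v, #({e ∈ S | v ∈ e.supp} : Finset _).offDiag := by
        simp only [offDiag_card, degree, Nat.mul_sub_one]
    _ = #(univ.biUnion fun v => ({e ∈ S | v ∈ e.supp} : Finset _).offDiag) :=
        (card_biUnion hdisj).symm
    _ ≤ _ := card_le_card fun ⟨e, f⟩ hp => by
        simp only [mem_biUnion, mem_offDiag, mem_filter] at hp
        obtain ⟨v, -, ⟨he, hve⟩, ⟨hf, hvf⟩, hef⟩ := hp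
        simp only [mem_filter, mem_product]
        exact ⟨⟨he, hf⟩, johnson_adj_iff.2 ⟨hef, v, hve, hvf⟩⟩

end Doubleton

open Doubleton

lemma two_mul_ncard_outdeg_le {n : ℕ} (W : ℕ) (Λ : GraphOrientation (johnson n 2)) :
    2 * {e | outdeg Λ e ≤ W}.ncard ≤ (W + 1) * n := by
  classical
  set S : Finset (Doubleton n) := {e | outdeg Λ e ≤ W}
  have hS : {e | outdeg Λ e ≤ W}.ncard = #S := by
    rw [← Set.ncard_coe_finset]
    simp [S]
  have hout : ∑ e ∈ S, outdeg Λ e ≤ #S * W :=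
    sum_le_card_nsmul _ _ _ fun e he => (mem_filter.1 he).2
  have hsq : ∑ v, degree S v ^ 2 ≤ (W + 1) * ∑ v, degree S v := by
    have hpt (v : Fin n) : degree S v ^ 2 = degree S v * (degree S v - 1) + degree S v := by
      cases degree S v <;> simp [sq, Nat.mul_succ]
    rw [sum_congr rfl fun v _ => hpt v, sum_add_distrib, sum_degree]
    have := (sum_degree_mul_pred_le S).trans (Λ.card_adj_le_two_mul_sum_outdeg S)
    nlinarith
  have := sum_le_mul_card_of_sum_sq_le univ _ _ hsq
  rwa [sum_degree, card_univ, Fintype.card_fin, ← hS] at this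

section RankOrientation

variable {n : ℕ}

/-- Each point `a` ranks the points `b ≠ a` by `r a b`; of two words `{a, b}` and `{a, c}`, the
arc points to the one whose second point has the smaller rank at `a`. -/
def rankOrientation (r : Fin n → Fin n → ℕ) (hr : ∀ a, Set.InjOn (r a) {b | b ≠ a}) :
    GraphOrientation (johnson n 2) where
  dir (e f : Doubleton n) := e ≠ f ∧ ∃ a b c, a ∈ e.supp ∧ b ∈ e.supp ∧
    a ∈ f.supp ∧ c ∈ f.supp ∧ b ≠ a ∧ c ≠ a ∧ r a c < r a b
  dir_adj := fun _ _ ⟨hef, a, _, _, hae, _, haf, _⟩ => johnson_adj_iff.2 ⟨hef, a, hae, haf⟩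
  total e f hadj := by
    obtain ⟨hef, a, hae, haf⟩ := johnson_adj_iff.1 hadj
    obtain ⟨b, hbe, hba⟩ := exists_mem_supp_ne e a
    obtain ⟨c, hcf, hca⟩ := exists_mem_supp_ne f a
    have hbc : b ≠ c := fun h => hef (eq_of_mem_of_mem hba.symm hae hbe haf (h ▸ hcf))
    rcases lt_or_gt_of_ne fun h => hbc (hr a hba hca h) with h | h
    · exact Or.inr ⟨Ne.symm hef, a, c, b, haf, hcf, hae, hbe, hca, hba, h⟩
    · exact Or.inl ⟨hef, a, b, c, hae, hbe, haf, hcf, hba, hca, h⟩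
  asymm := by
    rintro e f ⟨hef, a, b, c, hae, hbe, haf, hcf, hba, hca, hlt⟩
      ⟨-, a', c', b', ha'f, hc'f, ha'e, hb'e, hc'a', hb'a', hlt'⟩
    obtain rfl | haa' := eq_or_ne a a'
    · rw [eq_of_ne_of_mem hae hbe hb'e hba hb'a',
        eq_of_ne_of_mem haf hcf hc'f hca hc'a'] at hlt
      exact lt_asymm hlt hlt'
    · exact hef (eq_of_mem_of_mem haa' hae ha'e haf ha'f)

def rankBelow (r : Fin n → Fin n → ℕ) (a : Fin n) (k : ℕ) : Set (Doubleton n) :=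
  {f | ∃ c, c ≠ a ∧ a ∈ f.supp ∧ c ∈ f.supp ∧ r a c < k}

variable {r : Fin n → Fin n → ℕ}

lemma ncard_rankBelow_le (hr : ∀ a, Set.InjOn (r a) {b | b ≠ a}) (a : Fin n) (k : ℕ) :
    (rankBelow r a k).ncard ≤ k := by
  classical
  rw [← Set.ncard_image_of_injective _ supp_injective]
  calc _ ≤ ((fun c => ({a, c} : Finset (Fin n))) '' {c | c ≠ a ∧ r a c < k}).ncard := by
        refine Set.ncard_le_ncard ?_ (Set.toFinite _)
        rintro _ ⟨f, ⟨c, hca, haf, hcf, hc⟩, rfl⟩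
        exact ⟨c, ⟨hca, hc⟩, (supp_eq_pair hca.symm haf hcf).symm⟩
    _ ≤ {c | c ≠ a ∧ r a c < k}.ncard := Set.ncard_image_le (Set.toFinite _)
    _ ≤ (range k : Set ℕ).ncard :=
        Set.ncard_le_ncard_of_injOn (r a) (fun c hc => by simpa using hc.2)
          (fun b hb c hc h => hr a hb.1 hc.1 h) (Set.toFinite _)
    _ = k := by rw [Set.ncard_coe_finset, card_range]

lemma outdeg_rankOrientation_le (hr : ∀ a, Set.InjOn (r a) {b | b ≠ a}) {e : Doubleton n}
    {a b : Fin n} (hab : a ≠ b) (ha : a ∈ e.supp) (hb : b ∈ e.supp) :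
    outdeg (rankOrientation r hr) e ≤ r a b + r b a := by
  have hsub : {f | (rankOrientation r hr).dir e f} ⊆
      rankBelow r a (r a b) ∪ rankBelow r b (r b a) := by
    rintro f ⟨-, a', b', c, ha'e, hb'e, ha'f, hcf, hb'a', hca', hlt⟩
    rw [supp_eq_pair hab ha hb] at ha'e hb'e
    simp only [mem_insert, mem_singleton] at ha'e hb'e
    rcases ha'e with rfl | rfl <;> rcases hb'e with rfl | rfl
    all_goals first
      | exact absurd rfl hb'a'
      | exact Or.inl ⟨c, hca', ha'f, hcf, hlt⟩
      | exact Or.inr ⟨c, hca', ha'f, hcf, hlt⟩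
  calc outdeg (rankOrientation r hr) e
      ≤ _ := Set.ncard_le_ncard hsub (Set.toFinite _)
    _ ≤ r a b + r b a := (Set.ncard_union_le _ _).trans
        (add_le_add (ncard_rankBelow_le hr a _) (ncard_rankBelow_le hr b _))

end RankOrientation

section Harary

variable (n K : ℕ)

def cwDist (a b : ℕ) : ℕ := if a ≤ b then b - a else b + n - a

/-- Along a chord of clockwise length `d ≤ K/2` from `a` to `b`, `b` gets rank `d - 1` at `a`
and `a` gets rank `K - d` at `b`; a matching edge `{a, a + n/2}` (used for odd `K`) gets the
middle rank `K/2` at both ends. The ranks of all other points are distinct and `≥ K`. -/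
def hararyRank (a b : ℕ) : ℕ :=
  if cwDist n a b ≤ K / 2 then cwDist n a b - 1
  else if cwDist n b a ≤ K / 2 then K - cwDist n b a
  else if K % 2 = 1 ∧ (a < n / 2 ∧ b = a + n / 2 ∨ b < n / 2 ∧ a = b + n / 2) then K / 2
  else K + b

/-- `(a, d)` with `d ≥ 1` stands for the chord from `a` to `a + d mod n`, and `(a, 0)` for the
matching edge `{a, a + n/2}`. -/
def hararyIndex : Finset (ℕ × ℕ) :=
  range n ×ˢ Icc 1 (K / 2) ∪ range (if K % 2 = 1 then n / 2 else 0) ×ˢ {0}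

def hararyHead (p : ℕ × ℕ) : ℕ :=
  if p.2 = 0 then p.1 + n / 2 else if p.1 + p.2 < n then p.1 + p.2 else p.1 + p.2 - n

variable {n K}

lemma hararyRank_inj {a b c : ℕ} (ha : a < n) (hb : b < n) (hc : c < n)
    (hba : b ≠ a) (hca : c ≠ a) (h : hararyRank n K a b = hararyRank n K a c) : b = c := by
  simp only [hararyRank, cwDist] at h
  split_ifs at h <;> omega

lemma card_hararyIndex : #(hararyIndex n K) = K * n / 2 := by
  rw [hararyIndex, card_union_of_disjoint (disjoint_left.2 fun p hp hq => by
    simp only [mem_product, mem_Icc, mem_singleton] at hp hq; omega)]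
  simp only [card_product, card_range, Nat.card_Icc, card_singleton]
  rcases Nat.even_or_odd' K with ⟨t, rfl | rfl⟩
  · rw [show 2 * t / 2 + 1 - 1 = t by omega, show 2 * t * n = 2 * (n * t) by ring]
    split_ifs <;> omega
  · rw [show (2 * t + 1) / 2 + 1 - 1 = t by omega,
      show (2 * t + 1) * n = 2 * (n * t) + n by ring]
    split_ifs <;> omega

lemma mem_hararyIndex {p : ℕ × ℕ} (hK : K ≤ n - 1) (hp : p ∈ hararyIndex n K) :
    p.1 < n ∧ hararyHead n p < n ∧ p.1 ≠ hararyHead n p ∧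
      hararyRank n K p.1 (hararyHead n p) + hararyRank n K (hararyHead n p) p.1 ≤ K - 1 := by
  simp only [hararyIndex, mem_union, mem_product, mem_range, mem_Icc, mem_singleton] at hp
  simp only [hararyRank, hararyHead, cwDist]
  split_ifs at * <;> omega

lemma hararyIndex_injOn (hK : K ≤ n - 1) :
    Set.InjOn (fun p => ({p.1, hararyHead n p} : Finset ℕ)) (hararyIndex n K) := by
  intro p hp q hq h
  have := congrArg (fun s : Finset ℕ => (s : Set ℕ)) h
  simp only [coe_insert, coe_singleton, Set.pair_eq_pair_iff, hararyHead] at this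
  simp only [hararyIndex, mem_coe, mem_union, mem_product, mem_range, mem_Icc, mem_singleton]
    at hp hq
  ext <;> split_ifs at * <;> omega

end Harary

def hararyOrientation (n K : ℕ) : GraphOrientation (johnson n 2) :=
  rankOrientation (fun a b => hararyRank n K a b) fun a b hb c hc h =>
    Fin.ext (hararyRank_inj a.isLt b.isLt c.isLt (Fin.val_ne_of_ne hb) (Fin.val_ne_of_ne hc) h)

lemma mul_div_two_le_ncard_outdeg_hararyOrientation_le {n K W : ℕ} (hKn : K ≤ n - 1)
    (hKW : K ≤ W + 1) : K * n / 2 ≤ {e | outdeg (hararyOrientation n K) e ≤ W}.ncard := by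
  have hsub : ↑((hararyIndex n K).image fun p => ({p.1, hararyHead n p} : Finset ℕ)) ⊆
      (fun e : Doubleton n => e.supp.map Fin.valEmbedding) ''
        {e | outdeg (hararyOrientation n K) e ≤ W} := by
    intro s hs
    obtain ⟨p, hp, rfl⟩ := mem_image.1 hs
    obtain ⟨ha, hb, hab, hrank⟩ := mem_hararyIndex hKn hp
    have hab' : (⟨p.1, ha⟩ : Fin n) ≠ ⟨hararyHead n p, hb⟩ :=
      fun h => hab (Fin.val_eq_of_eq h)
    refine ⟨ofFinset {⟨p.1, ha⟩, ⟨hararyHead n p, hb⟩} (card_pair hab'), ?_, by simp⟩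
    refine (outdeg_rankOrientation_le (r := fun a b => hararyRank n K a b) _ hab' (by simp)
      (by simp)).trans ?_
    dsimp only
    omega
  rw [← card_hararyIndex, ← card_image_of_injOn (hararyIndex_injOn hKn),
    ← Set.ncard_coe_finset]
  exact (Set.ncard_le_ncard hsub (Set.toFinite _)).trans (Set.ncard_image_le (Set.toFinite _))

theorem stmt8 (W n : ℕ) : Lmax W n 2 = min ((W + 1) * n / 2) (n.choose 2) := by
  set K := min (W + 1) (n - 1)
  have hmin : min ((W + 1) * n / 2) (n.choose 2) = K * n / 2 := by
    have hmono : Monotone fun k => k * n / 2 := fun _ _ h => Nat.div_le_div_right (by gcongr)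
    rw [Nat.choose_two_right, mul_comm n, hmono.map_min]
  have hupper (Λ : GraphOrientation (johnson n 2)) :
      {e | outdeg Λ e ≤ W}.ncard ≤ K * n / 2 := by
    rw [← hmin]
    refine le_min ?_ ((Set.ncard_le_card _).trans card_eq_choose.le)
    have := two_mul_ncard_outdeg_le W Λ
    omega
  rw [hmin]
  refine IsGreatest.csSup_eq ⟨⟨hararyOrientation n K, le_antisymm ?_ (hupper _)⟩, ?_⟩
  · exact mul_div_two_le_ncard_outdeg_hararyOrientation_le (min_le_right ..) (min_le_left ..)
  · rintro _ ⟨Λ, rfl⟩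
    exact hupper Λ
end

section
/- Let τ(B) = Σ_{i=1}^{n} i·B_i mod n. If two distinct words B, B' ∈ S(n,w) satisfy τ(B) = τ(B'), then their Hamming distance is at least 4; consequently, some residue class of τ contains at least C(n,w)/n words, giving A(n,4,w) ≥ (1/n)·C(n,w), where A(n,4,w) is the maximum size of a constant weight code of length n, weight w, and minimum Hamming distance 4. -/
def tauM {n : ℕ} (m : ℕ) (B : Fin n → Bool) : ℕ :=
  (∑ i : Fin n, (i.1 + 1) * (if B i then 1 else 0)) % m

noncomputable def Acode (n w : ℕ) : ℕ :=
  sSup {k | ∃ C : Finset (Fin n → Bool), (∀ B ∈ C, weight B = w) ∧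
    (∀ B ∈ C, ∀ B' ∈ C, B ≠ B' → 4 ≤ hamming B B') ∧ k = C.card}

/-- auxiliary: tau as a sum over the support -/
lemma tau_eq_sum {n : ℕ} (m : ℕ) (B : Fin n → Bool) :
    tauM m B = (∑ i ∈ Finset.univ.filter (fun i => B i = true), (i.1 + 1)) % m := by
  unfold tauM
  congr 1
  rw [Finset.sum_filter]
  apply Finset.sum_congr rfl
  intro i _
  cases h : B i <;> simp [h]

lemma GS_dist {n w : ℕ} (B B' : Fin n → Bool) (hB : weight B = w)
    (hB' : weight B' = w) (hne : B ≠ B') (ht : tauM n B = tauM n B') :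
    4 ≤ hamming B B' := by
  classical
  set A := Finset.univ.filter (fun i => B i = true) with hA
  set A' := Finset.univ.filter (fun i => B' i = true) with hA'
  have hcard : A.card = A'.card := by
    have : weight B = weight B' := by rw [hB, hB']
    exact this
  have hfilter : Finset.univ.filter (fun i => B i ≠ B' i) = (A \ A') ∪ (A' \ A) := by
    ext i
    simp only [Finset.mem_filter, Finset.mem_union, Finset.mem_sdiff, hA, hA',
      Finset.mem_univ, true_and]
    cases h : B i <;> cases h' : B' i <;> simp
  have hdisj : Disjoint (A \ A') (A' \ A) := by
    exact disjoint_sdiff_sdiff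
  have hh : hamming B B' = (A \ A').card + (A' \ A).card := by
    unfold hamming
    rw [hfilter, Finset.card_union_of_disjoint hdisj]
  have h1 : (A \ A').card + (A ∩ A').card = A.card := Finset.card_sdiff_add_card_inter A A'
  have h2 : (A' \ A).card + (A' ∩ A).card = A'.card := Finset.card_sdiff_add_card_inter A' A
  have hinter : (A ∩ A').card = (A' ∩ A).card := by rw [Finset.inter_comm]
  have heqd : (A \ A').card = (A' \ A).card := by omega
  have hpos : 0 < hamming B B' := by
    unfold hamming
    rw [Finset.card_pos]
    obtain ⟨i, hi⟩ := Function.ne_iff.mp hne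
    exact ⟨i, by simp [hi]⟩
  have hne2 : hamming B B' ≠ 2 := by
    intro h2h
    have hd1 : (A \ A').card = 1 := by omega
    have hd2 : (A' \ A).card = 1 := by omega
    obtain ⟨i, hi⟩ := Finset.card_eq_one.mp hd1
    obtain ⟨j, hj⟩ := Finset.card_eq_one.mp hd2
    have hiA : i ∈ A \ A' := by rw [hi]; exact Finset.mem_singleton_self i
    have hjA : j ∈ A' \ A := by rw [hj]; exact Finset.mem_singleton_self j
    have hij : i ≠ j := by
      intro h
      rw [h] at hiA
      exact (Finset.mem_sdiff.mp hjA).2 (Finset.mem_sdiff.mp hiA).1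
    -- decompose the sums
    have hAu : (A ∩ A') ∪ (A \ A') = A := by
      ext x; simp only [Finset.mem_union, Finset.mem_inter, Finset.mem_sdiff]; tauto
    have hA'u : (A ∩ A') ∪ (A' \ A) = A' := by
      ext x; simp only [Finset.mem_union, Finset.mem_inter, Finset.mem_sdiff]; tauto
    have hdisj1 : Disjoint (A ∩ A') (A \ A') := by
      exact Finset.disjoint_sdiff.mono_left Finset.inter_subset_right
    have hdisj2 : Disjoint (A ∩ A') (A' \ A) := by
      exact Finset.disjoint_sdiff.mono_left Finset.inter_subset_left
    have hsi : ∑ x ∈ A \ A', (x.1 + 1) = i.1 + 1 := by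
      rw [hi, Finset.sum_singleton]
    have hsj : ∑ x ∈ A' \ A, (x.1 + 1) = j.1 + 1 := by
      rw [hj, Finset.sum_singleton]
    have hsum1 : ∑ x ∈ A, (x.1 + 1) = (∑ x ∈ A ∩ A', (x.1 + 1)) + (i.1 + 1) := by
      have h := Finset.sum_union (f := fun x : Fin n => x.1 + 1) hdisj1
      rw [hAu, hsi] at h
      exact h
    have hsum2 : ∑ x ∈ A', (x.1 + 1) = (∑ x ∈ A ∩ A', (x.1 + 1)) + (j.1 + 1) := by
      have h := Finset.sum_union (f := fun x : Fin n => x.1 + 1) hdisj2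
      rw [hA'u, hsj] at h
      exact h
    have htau : ((∑ x ∈ A ∩ A', (x.1 + 1)) + (i.1 + 1)) % n
        = ((∑ x ∈ A ∩ A', (x.1 + 1)) + (j.1 + 1)) % n := by
      have t1 := tau_eq_sum n B
      have t2 := tau_eq_sum n B'
      rw [t1, t2, ← hA, ← hA', hsum1, hsum2] at ht
      exact ht
    have hmod : (i.1 + 1) ≡ (j.1 + 1) [MOD n] :=
      Nat.ModEq.add_left_cancel' _ htau
    have hi_lt : i.1 < n := i.2
    have hj_lt : j.1 < n := j.2
    have hij' : i.1 ≠ j.1 := fun h => hij (Fin.ext h)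
    rcases Nat.lt_or_ge i.1 j.1 with hlt | hge
    · have hdvd : n ∣ (j.1 + 1) - (i.1 + 1) :=
        (Nat.modEq_iff_dvd' (by omega)).mp hmod
      have := Nat.eq_zero_of_dvd_of_lt hdvd (by omega)
      omega
    · have hlt : j.1 < i.1 := by omega
      have hdvd : n ∣ (i.1 + 1) - (j.1 + 1) :=
        (Nat.modEq_iff_dvd' (by omega)).mp hmod.symm
      have := Nat.eq_zero_of_dvd_of_lt hdvd (by omega)
      omega
  omega

lemma card_weight (n w : ℕ) :
    (Finset.univ.filter (fun B : Fin n → Bool => weight B = w)).card = n.choose w := by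
  classical
  have hpc : (Finset.powersetCard w (Finset.univ : Finset (Fin n))).card = n.choose w := by
    rw [Finset.card_powersetCard, Finset.card_univ, Fintype.card_fin]
  rw [← hpc]
  refine Finset.card_bij' (fun B _ => Finset.univ.filter (fun i => B i = true))
    (fun s _ => fun i => decide (i ∈ s)) ?hi ?hj ?left ?right
  case hi =>
    intro B hB
    rw [Finset.mem_powersetCard]
    exact ⟨Finset.subset_univ _, Finset.mem_filter.mp hB |>.2⟩
  case hj =>
    intro s hs
    rw [Finset.mem_filter]
    refine ⟨Finset.mem_univ _, ?_⟩
    have hss : (Finset.univ.filter (fun i => decide (i ∈ s) = true)) = s := by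
      ext i; simp
    rw [weight, hss]
    exact (Finset.mem_powersetCard.mp hs).2
  case left =>
    intro B hB
    funext i
    simp
  case right =>
    intro s hs
    ext i
    simp

theorem stmt12 (n w : ℕ) (hn : 0 < n) :
    (∀ B B' : Fin n → Bool, weight B = w → weight B' = w → B ≠ B' →
      tauM n B = tauM n B' → 4 ≤ hamming B B') ∧
    (∃ c : ℕ, c < n ∧
      n.choose w ≤ n * {B : Fin n → Bool | weight B = w ∧ tauM n B = c}.ncard) ∧
    n.choose w ≤ n * Acode n w := by
  classical
  refine ⟨fun B B' hB hB' hne ht => GS_dist B B' hB hB' hne ht, ?_⟩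
  -- pigeonhole
  have hfiber : ∀ c : ℕ, {B : Fin n → Bool | weight B = w ∧ tauM n B = c}.ncard
      = (Finset.univ.filter (fun B : Fin n → Bool => weight B = w ∧ tauM n B = c)).card := by
    intro c
    rw [Set.ncard_eq_toFinset_card', Set.toFinset_setOf]
  have hmaps : ∀ B ∈ Finset.univ.filter (fun B : Fin n → Bool => weight B = w),
      tauM n B ∈ Finset.range n := by
    intro B _
    rw [Finset.mem_range]
    exact Nat.mod_lt _ hn
  have hsum : (Finset.univ.filter (fun B : Fin n → Bool => weight B = w)).card
      = ∑ c ∈ Finset.range n,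
        ((Finset.univ.filter (fun B : Fin n → Bool => weight B = w)).filter
          (fun B => tauM n B = c)).card :=
    Finset.card_eq_sum_card_fiberwise hmaps
  have hff : ∀ c : ℕ, ((Finset.univ.filter (fun B : Fin n → Bool => weight B = w)).filter
      (fun B => tauM n B = c))
      = Finset.univ.filter (fun B : Fin n → Bool => weight B = w ∧ tauM n B = c) := by
    intro c
    rw [Finset.filter_filter]
  have hsum' : n.choose w = ∑ c ∈ Finset.range n,
      (Finset.univ.filter (fun B : Fin n → Bool => weight B = w ∧ tauM n B = c)).card := by
    rw [← card_weight n w, hsum]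
    exact Finset.sum_congr rfl fun c _ => by rw [hff c]
  have hex : ∃ c ∈ Finset.range n, n.choose w ≤
      n * (Finset.univ.filter (fun B : Fin n → Bool => weight B = w ∧ tauM n B = c)).card := by
    apply Finset.exists_le_of_sum_le (Finset.nonempty_range_iff.mpr (by omega))
    rw [Finset.sum_const, Finset.card_range, smul_eq_mul, ← Finset.mul_sum, ← hsum']
  obtain ⟨c, hc, hcle⟩ := hex
  refine ⟨⟨c, Finset.mem_range.mp hc, by rw [hfiber c]; exact hcle⟩, ?_⟩
  -- code bound
  set C := Finset.univ.filter (fun B : Fin n → Bool => weight B = w ∧ tauM n B = c) with hC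
  have hmem : C.card ∈ {k | ∃ C : Finset (Fin n → Bool), (∀ B ∈ C, weight B = w) ∧
      (∀ B ∈ C, ∀ B' ∈ C, B ≠ B' → 4 ≤ hamming B B') ∧ k = C.card} := by
    refine ⟨C, fun B hB => (Finset.mem_filter.mp hB).2.1, ?_, rfl⟩
    intro B hB B' hB' hne
    have h1 := (Finset.mem_filter.mp hB).2
    have h2 := (Finset.mem_filter.mp hB').2
    exact GS_dist B B' h1.1 h2.1 hne (h1.2.trans h2.2.symm)
  have hbdd : BddAbove {k | ∃ C : Finset (Fin n → Bool), (∀ B ∈ C, weight B = w) ∧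
      (∀ B ∈ C, ∀ B' ∈ C, B ≠ B' → 4 ≤ hamming B B') ∧ k = C.card} := by
    refine ⟨Fintype.card (Fin n → Bool), ?_⟩
    rintro k ⟨D, -, -, rfl⟩
    exact Finset.card_le_univ D
  have hAcode : C.card ≤ Acode n w := le_csSup hbdd hmem
  calc n.choose w ≤ n * C.card := hcle
    _ ≤ n * Acode n w := Nat.mul_le_mul_left n hAcode
end
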